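/- arXiv:2602.06320 — 2 statements merged into one kernel-verified Lean document; each statement's English description precedes it below -/
import Mathlib

section
/- Let δ > 0 and let μ_MP be the Marchenko–Pastur distribution with parameter δ. Then for every real z < 0, the Stieltjes transform of μ_MP satisfies ∫ 1/(x − z) dμ_MP(x) = ( δ(1 − z) − 1 − √( (δ(1 − z) − 1)² − 4 δ z ) ) / (2 z). -/
open MeasureTheory

/-- Lower edge `λ₋ = (1 − 1/√δ)²` of the Marchenko–Pastur bulk. -/
noncomputable def lamMinus (δ : ℝ) : ℝ := (1 - 1 / Real.sqrt δ) ^ 2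

/-- Upper edge `λ₊ = (1 + 1/√δ)²` of the Marchenko–Pastur bulk. -/
noncomputable def lamPlus (δ : ℝ) : ℝ := (1 + 1 / Real.sqrt δ) ^ 2

/-- Density `δ √((λ₊ − x)(x − λ₋)) / (2π x)` of the bulk of the Marchenko–Pastur law. -/
noncomputable def mpDensity (δ : ℝ) (x : ℝ) : ℝ :=
  δ * Real.sqrt ((lamPlus δ - x) * (x - lamMinus δ)) / (2 * Real.pi * x)

/-- The Marchenko–Pastur distribution with parameter `δ`: the absolutely continuous part
with density `mpDensity δ` supported on `[λ₋, λ₊]`, plus an atom of mass `1 − δ` at `0`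
(present exactly when `δ < 1`, since `ENNReal.ofReal (1 − δ) = 0` for `δ ≥ 1`). -/
noncomputable def mpMeasure (δ : ℝ) : Measure ℝ :=
  volume.withDensity
      (fun x => ENNReal.ofReal ((Set.Icc (lamMinus δ) (lamPlus δ)).indicator (mpDensity δ) x))
    + ENNReal.ofReal (1 - δ) • Measure.dirac 0


section MPAux
open Set Real intervalIntegral
open scoped ENNReal NNReal

lemma hasDerivAt_sqrtfun {a b x : ℝ} (hx : x ∈ Ioo a b) :
    HasDerivAt (fun x => Real.sqrt ((b - x) * (x - a)))
      (((a+b)/2 - x) / Real.sqrt ((b - x) * (x - a))) x := by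
  have hpos : 0 < (b - x) * (x - a) := mul_pos (by linarith [hx.2]) (by linarith [hx.1])
  have h1 : HasDerivAt (fun x : ℝ => (b - x) * (x - a)) (a + b - 2*x) x := by
    have := ((hasDerivAt_id x).const_sub b).mul ((hasDerivAt_id x).sub_const a)
    refine this.congr_deriv (Eq.symm ?_); simp; ring
  have h2 := h1.sqrt (ne_of_gt hpos)
  convert h2 using 1
  have hs : Real.sqrt ((b - x) * (x - a)) ≠ 0 := by positivity
  field_simp

lemma hasDerivAt_arcsin_mid {a b x : ℝ} (hab : a < b) (hx : x ∈ Ioo a b) :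
    HasDerivAt (fun x => Real.arcsin ((x - (a+b)/2) / ((b-a)/2)))
      (1 / Real.sqrt ((b - x) * (x - a))) x := by
  set m := (a+b)/2 with hm; set r := (b-a)/2 with hr
  have hrpos : 0 < r := by rw [hr]; linarith
  have hba : b - a ≠ 0 := by linarith
  have hy1 : (x - m)/r ≠ -1 := by
    intro h; rw [div_eq_iff (ne_of_gt hrpos)] at h; rw [hm, hr] at h; nlinarith [hx.1]
  have hy2 : (x - m)/r ≠ 1 := by
    intro h; rw [div_eq_iff (ne_of_gt hrpos)] at h; rw [hm, hr] at h; nlinarith [hx.2]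
  have hin : HasDerivAt (fun x : ℝ => (x - m)/r) (1/r) x := by
    simpa using ((hasDerivAt_id x).sub_const m).div_const r
  have h := (Real.hasDerivAt_arcsin hy1 hy2).comp x hin
  refine h.congr_deriv (Eq.symm ?_)
  have hq : 1 - ((x - m)/r)^2 = ((b - x) * (x - a))/r^2 := by
    rw [hm, hr]; field_simp [hba]; ring
  have hkey : Real.sqrt (1 - ((x - m)/r)^2) = Real.sqrt ((b - x) * (x - a)) / r := by
    rw [hq, Real.sqrt_div' _ (by positivity), Real.sqrt_sq hrpos.le]
  rw [hkey]
  have hs : (0:ℝ) < Real.sqrt ((b - x) * (x - a)) :=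
    Real.sqrt_pos.mpr (mul_pos (by linarith [hx.2]) (by linarith [hx.1]))
  field_simp

lemma hasDerivAt_arcsin_v {a b w x : ℝ} (hab : a < b) (hw : w < a) (hx : x ∈ Ioo a b) :
    HasDerivAt (fun x => Real.arcsin
        ((((a+b)/2 - w)*(x - (a+b)/2) + ((b-a)/2)^2) / (((b-a)/2)*(x - w))))
      (Real.sqrt (((a+b)/2 - w)^2 - ((b-a)/2)^2) /
        (Real.sqrt ((b - x) * (x - a)) * (x - w))) x := by
  set m := (a+b)/2 with hm; set r := (b-a)/2 with hr; set p := m - w with hp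
  have hrpos : 0 < r := by rw [hr]; linarith
  have hpr : r < p := by rw [hp, hm, hr]; linarith
  have hxm : x - w = (x - m) + p := by rw [hp]; ring
  have hbx : ∀ y : ℝ, (b - y) * (y - a) = r^2 - (y - m)^2 := by
    intro y; rw [hm, hr]; ring
  have hc2 : 0 < p^2 - r^2 := by nlinarith
  set c := Real.sqrt (p^2 - r^2) with hc
  have hcpos : 0 < c := Real.sqrt_pos.mpr hc2
  have hcsq : c^2 = p^2 - r^2 := Real.sq_sqrt hc2.le
  have hxw : 0 < x - w := by linarith [hx.1]
  have hspos : (0:ℝ) < Real.sqrt ((b - x) * (x - a)) :=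
    Real.sqrt_pos.mpr (mul_pos (by linarith [hx.2]) (by linarith [hx.1]))
  set s := Real.sqrt ((b - x) * (x - a)) with hs
  have hssq : s^2 = (b - x) * (x - a) := Real.sq_sqrt (by nlinarith [hx.1, hx.2])
  clear_value m r p c s
  clear hm hr hp hc hs
  have hN : HasDerivAt (fun x : ℝ => p*(x - m) + r^2) p x := by
    simpa using (((hasDerivAt_id x).sub_const m).const_mul p).add_const (r^2)
  have hD : HasDerivAt (fun x : ℝ => r*(x - w)) r x := by
    simpa using ((hasDerivAt_id x).sub_const w).const_mul r
  have hDne : r*(x - w) ≠ 0 := by positivity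
  have hv := hN.div hD hDne
  have hr0 : r ≠ 0 := ne_of_gt hrpos
  have hxw0 : x - w ≠ 0 := ne_of_gt hxw
  have hs0 : s ≠ 0 := ne_of_gt hspos
  have hc0 : c ≠ 0 := ne_of_gt hcpos
  have hkey : 1 - ((p*(x - m) + r^2) / (r*(x - w)))^2 = c^2*s^2 / (r*(x - w))^2 := by
    rw [hcsq, hssq, hbx x, hxm]
    have hmp : x - m + p ≠ 0 := by rw [← hxm]; exact hxw0
    field_simp
    ring
  have h1v : 0 < 1 - ((p*(x - m) + r^2) / (r*(x - w)))^2 := by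
    rw [hkey]; positivity
  have hv1 : (p*(x - m) + r^2) / (r*(x - w)) ≠ -1 := by
    intro h; rw [h] at h1v; norm_num at h1v
  have hv2 : (p*(x - m) + r^2) / (r*(x - w)) ≠ 1 := by
    intro h; rw [h] at h1v; norm_num at h1v
  have h := (Real.hasDerivAt_arcsin hv1 hv2).comp x hv
  refine h.congr_deriv (Eq.symm ?_)
  have hsq1 : Real.sqrt (1 - ((p*(x - m) + r^2) / (r*(x - w)))^2) = c*s/(r*(x - w)) := by
    rw [hkey]
    rw [show c^2*s^2/(r*(x-w))^2 = (c*s/(r*(x-w)))^2 by rw [div_pow]; ring]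
    exact Real.sqrt_sq (by positivity)
  rw [hsq1]
  have hnum : p * (r*(x - w)) - (p*(x - m) + r^2) * r = c^2 * r := by
    rw [hcsq, hxm]; ring
  rw [hnum]
  field_simp

lemma sqrt_term_continuous (a b : ℝ) : Continuous (fun x => Real.sqrt ((b - x) * (x - a))) :=
  Real.continuous_sqrt.comp (by continuity)

lemma key_integrable (a b w : ℝ) (hab : a < b) (hw : w ≤ a) :
    IntervalIntegrable (fun x => Real.sqrt ((b - x) * (x - a)) / (x - w)) volume a b := by
  rcases hw.eq_or_lt with rfl | hw
  · -- w = a case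
    have hmeas : AEStronglyMeasurable (fun x => Real.sqrt ((b - x) * (x - w)) / (x - w))
        (volume.restrict (Set.uIoc w b)) := by
      refine (Measurable.aestronglyMeasurable ?_)
      exact ((sqrt_term_continuous w b).measurable).div ((measurable_id.sub measurable_const))
    have hg : IntervalIntegrable (fun x => Real.sqrt (b - w) * (x - w) ^ (-(1/2) : ℝ))
        volume w b := by
      have h0 : IntervalIntegrable (fun x : ℝ => x ^ (-(1/2) : ℝ)) volume 0 (b - w) :=
        intervalIntegral.intervalIntegrable_rpow' (by norm_num)
      have h1 := (h0.comp_sub_right w)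
      simpa using h1.const_mul (Real.sqrt (b - w))
    refine hg.mono_fun hmeas ?_
    rw [Set.uIoc_of_le hab.le]
    filter_upwards [MeasureTheory.ae_restrict_mem measurableSet_Ioc] with x hx
    have hxw : 0 < x - w := by simp at hx; linarith [hx.1]
    have hbw : (0:ℝ) ≤ b - w := by linarith
    have hs1 : Real.sqrt ((b - x) * (x - w)) ≤ Real.sqrt (b - w) * Real.sqrt (x - w) := by
      rw [← Real.sqrt_mul hbw]
      apply Real.sqrt_le_sqrt
      have hxb : x ≤ b := hx.2
      nlinarith
    have hrw : (x - w) ^ (-(1/2) : ℝ) = (Real.sqrt (x - w))⁻¹ := by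
      rw [Real.rpow_neg hxw.le, ← Real.sqrt_eq_rpow]
    have hsq : (0:ℝ) < Real.sqrt (x - w) := Real.sqrt_pos.mpr hxw
    rw [Real.norm_eq_abs, Real.norm_eq_abs, abs_of_nonneg (by positivity),
      abs_of_nonneg (by rw [hrw]; positivity)]
    rw [hrw]
    calc Real.sqrt ((b - x) * (x - w)) / (x - w)
        ≤ Real.sqrt (b - w) * Real.sqrt (x - w) / (x - w) := by gcongr
      _ = Real.sqrt (b - w) * (Real.sqrt (x - w))⁻¹ := by
          rw [mul_div_assoc, Real.sqrt_div_self]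
  · apply ContinuousOn.intervalIntegrable
    apply ContinuousOn.div
    · exact (sqrt_term_continuous a b).continuousOn
    · exact (continuous_id.sub continuous_const).continuousOn
    · intro x hx
      rw [Set.uIcc_of_le hab.le] at hx
      have := hx.1
      intro h; linarith [hx.1, (by linarith : w < x)]

lemma key_integral (a b w : ℝ) (hab : a < b) (hw : w ≤ a) :
    ∫ x in a..b, Real.sqrt ((b - x) * (x - a)) / (x - w)
      = Real.pi * ((a+b)/2 - w - Real.sqrt (((a+b)/2 - w)^2 - ((b-a)/2)^2)) := by
  rcases hw.eq_or_lt with rfl | hwlt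
  · -- w = a
    set m := (w+b)/2 with hm
    set r := (b-w)/2 with hr
    have hrpos : 0 < r := by rw [hr]; linarith
    have hr0 : r ≠ 0 := ne_of_gt hrpos
    have hc0 : Real.sqrt ((m - w)^2 - r^2) = 0 := by
      rw [show (m - w)^2 - r^2 = 0 by rw [hm, hr]; ring, Real.sqrt_zero]
    have hp : m - w = r := by rw [hm, hr]; ring
    rw [show (w+b)/2 - w - Real.sqrt (((w+b)/2 - w)^2 - ((b-w)/2)^2) = m - w - 0 by
      rw [← hm, ← hr, hc0]]
    set F : ℝ → ℝ := fun x => Real.sqrt ((b - x) * (x - w)) + r * Real.arcsin ((x - m)/r)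
      with hF
    have hcont : ContinuousOn F (Set.Icc w b) :=
      (((sqrt_term_continuous w b).add (continuous_const.mul (Real.continuous_arcsin.comp
        (by continuity)))).continuousOn)
    have hderiv : ∀ x ∈ Set.Ioo w b, HasDerivAt F
        (Real.sqrt ((b - x) * (x - w)) / (x - w)) x := by
      intro x hx
      have h1 := hasDerivAt_sqrtfun hx
      have h2 := (hasDerivAt_arcsin_mid hab hx).const_mul r
      have h := h1.add h2
      rw [← hm, ← hr] at h
      refine h.congr_deriv (Eq.symm ?_)
      have hspos : (0:ℝ) < Real.sqrt ((b - x) * (x - w)) :=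
        Real.sqrt_pos.mpr (mul_pos (by linarith [hx.2]) (by linarith [hx.1]))
      have hssq : Real.sqrt ((b - x) * (x - w)) ^ 2 = (b - x) * (x - w) :=
        Real.sq_sqrt (by nlinarith [hx.1, hx.2])
      set s := Real.sqrt ((b - x) * (x - w)) with hs
      have hs0 : s ≠ 0 := ne_of_gt hspos
      have hxw0 : x - w ≠ 0 := by have := hx.1; intro h; linarith
      have hb : b = m + r := by rw [hm, hr]; ring
      clear_value m r s
      clear hm hr hs hc0 hF hcont
      subst hb
      field_simp
      linear_combination hssq
    rw [intervalIntegral.integral_eq_sub_of_hasDerivAt_of_le hab.le hcont hderiv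
      (key_integrable w b w hab le_rfl)]
    have hFb : F b = r * (Real.pi/2) := by
      rw [hF]
      simp only
      rw [show (b - b) * (b - w) = 0 by ring, Real.sqrt_zero,
        show (b - m)/r = 1 by rw [div_eq_one_iff_eq hr0, hm, hr]; ring, Real.arcsin_one]
      ring
    have hFa : F w = r * (-(Real.pi/2)) := by
      rw [hF]
      simp only
      rw [show (b - w) * (w - w) = 0 by ring, Real.sqrt_zero,
        show (w - m)/r = -1 by rw [div_eq_iff hr0, hm, hr]; ring, Real.arcsin_neg_one]
      ring
    rw [hFb, hFa, hp]
    ring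
  · -- w < a
    set m := (a+b)/2 with hm
    set r := (b-a)/2 with hr
    set p := m - w with hp
    have hrpos : 0 < r := by rw [hr]; linarith
    have hr0 : r ≠ 0 := ne_of_gt hrpos
    have hpr : r < p := by rw [hp, hm, hr]; linarith
    have hc2 : (0:ℝ) < p^2 - r^2 := by nlinarith
    have hcsq : Real.sqrt (p^2 - r^2) ^ 2 = p^2 - r^2 := Real.sq_sqrt hc2.le
    set c := Real.sqrt (p^2 - r^2) with hc
    have hcpos : 0 < c := Real.sqrt_pos.mpr hc2
    rw [show (a+b)/2 - w - Real.sqrt (((a+b)/2 - w)^2 - ((b-a)/2)^2) = p - c by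
      rw [hc, hp, hm, hr]]
    set F : ℝ → ℝ := fun x => Real.sqrt ((b - x) * (x - a)) + p * Real.arcsin ((x - m)/r)
      - c * Real.arcsin ((p*(x - m) + r^2) / (r*(x - w))) with hF
    have hcont : ContinuousOn F (Set.Icc a b) := by
      apply ContinuousOn.sub
      · exact ((sqrt_term_continuous a b).add (continuous_const.mul
          (Real.continuous_arcsin.comp (by continuity)))).continuousOn
      · apply continuousOn_const.mul
        apply Real.continuous_arcsin.comp_continuousOn
        apply ContinuousOn.div
        · exact (by continuity : Continuous fun x : ℝ => p*(x - m) + r^2).continuousOn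
        · exact (by continuity : Continuous fun x : ℝ => r*(x - w)).continuousOn
        · intro x hx
          have hwx : 0 < x - w := by have := hx.1; simp at this ⊢; linarith
          exact ne_of_gt (mul_pos hrpos hwx)
    have hderiv : ∀ x ∈ Set.Ioo a b, HasDerivAt F
        (Real.sqrt ((b - x) * (x - a)) / (x - w)) x := by
      intro x hx
      have h1 := hasDerivAt_sqrtfun hx
      have h2 := (hasDerivAt_arcsin_mid hab hx).const_mul p
      have h3 := (hasDerivAt_arcsin_v hab hwlt hx).const_mul c
      have h := (h1.add h2).sub h3
      rw [← hm, ← hr, ← hp, ← hc] at h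
      refine h.congr_deriv (Eq.symm ?_)
      have hspos : (0:ℝ) < Real.sqrt ((b - x) * (x - a)) :=
        Real.sqrt_pos.mpr (mul_pos (by linarith [hx.2]) (by linarith [hx.1]))
      have hssq : Real.sqrt ((b - x) * (x - a)) ^ 2 = (b - x) * (x - a) :=
        Real.sq_sqrt (by nlinarith [hx.1, hx.2])
      set s := Real.sqrt ((b - x) * (x - a)) with hs
      have hs0 : s ≠ 0 := ne_of_gt hspos
      have hc0 : c ≠ 0 := ne_of_gt hcpos
      have hxw0 : x - w ≠ 0 := by have := hx.1; intro h; linarith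
      have hb2 : b = m + r := by rw [hm, hr]; ring
      have ha2 : a = m - r := by rw [hm, hr]; ring
      have hw2 : w = m - p := by rw [hp]; ring
      clear_value m r p c s
      clear hm hr hp hc hs hF hcont
      subst hb2 ha2 hw2
      have e1 : (m - x)/s + p*(1/s) - c*(c/(s*(x - (m - p))))
          = ((m - x + p)*(x - (m - p)) - c^2)/(s*(x - (m - p))) := by
        field_simp
      have e2 : (m - x + p)*(x - (m - p)) - c^2 = s^2 := by
        rw [hcsq, hssq]; ring
      rw [e1, e2, pow_two, mul_div_mul_left _ _ hs0]
    rw [intervalIntegral.integral_eq_sub_of_hasDerivAt_of_le hab.le hcont hderiv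
      (key_integrable a b w hab hwlt.le)]
    have hbw : (0:ℝ) < b - w := by linarith
    have haw : (0:ℝ) < a - w := by linarith
    have hFb : F b = p * (Real.pi/2) - c * (Real.pi/2) := by
      rw [hF]
      simp only
      rw [show (b - b) * (b - a) = 0 by ring, Real.sqrt_zero,
        show (b - m)/r = 1 by rw [div_eq_one_iff_eq hr0, hm, hr]; ring, Real.arcsin_one,
        show (p*(b - m) + r^2) / (r*(b - w)) = 1 by
          rw [show p*(b - m) + r^2 = r*(b - w) by rw [hp, hm, hr]; ring]
          exact div_self (ne_of_gt (mul_pos hrpos hbw)),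
        Real.arcsin_one]
      ring
    have hFa : F a = p * (-(Real.pi/2)) - c * (-(Real.pi/2)) := by
      rw [hF]
      simp only
      rw [show (b - a) * (a - a) = 0 by ring, Real.sqrt_zero,
        show (a - m)/r = -1 by rw [div_eq_iff hr0, hm, hr]; ring, Real.arcsin_neg_one,
        show (p*(a - m) + r^2) / (r*(a - w)) = -1 by
          rw [show p*(a - m) + r^2 = -(r*(a - w)) by rw [hp, hm, hr]; ring, neg_div]
          rw [div_self (ne_of_gt (mul_pos hrpos haw))],
        Real.arcsin_neg_one]
      ring
    rw [hFb, hFa]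
    ring

lemma partial_fraction (a b z : ℝ) (ha : 0 ≤ a) (hz : z < 0) {x : ℝ} (hx : x ∈ Set.Icc a b) :
    Real.sqrt ((b - x) * (x - a)) / (x * (x - z))
      = (1/z) * (Real.sqrt ((b - x) * (x - a)) / (x - z)
          - Real.sqrt ((b - x) * (x - a)) / (x - 0)) := by
  have hz0 : z ≠ 0 := ne_of_lt hz
  rcases eq_or_lt_of_le (le_trans ha hx.1) with h0 | h0
  · -- x = 0, hence a = 0
    have hx0 : x = 0 := h0.symm
    have ha0 : a = 0 := le_antisymm (by linarith [hx.1, hx0]) ha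
    rw [hx0, ha0]
    simp
  · have hxz : x - z ≠ 0 := by intro h; linarith
    have hx0 : x ≠ 0 := ne_of_gt h0
    rw [sub_zero]
    field_simp
    ring

lemma bulk_integral (a b z : ℝ) (ha : 0 ≤ a) (hab : a < b) (hz : z < 0) :
    ∫ x in a..b, Real.sqrt ((b - x) * (x - a)) / (x * (x - z))
      = (1/z) * ((Real.pi * ((a+b)/2 - z - Real.sqrt (((a+b)/2 - z)^2 - ((b-a)/2)^2)))
          - (Real.pi * ((a+b)/2 - 0 - Real.sqrt (((a+b)/2 - 0)^2 - ((b-a)/2)^2)))) := by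
  have hint1 := key_integrable a b z hab (by linarith)
  have hint2 := key_integrable a b 0 hab ha
  have hcongr : Set.EqOn (fun x => Real.sqrt ((b - x) * (x - a)) / (x * (x - z)))
      (fun x => (1/z) * (Real.sqrt ((b - x) * (x - a)) / (x - z)
          - Real.sqrt ((b - x) * (x - a)) / (x - 0))) (Set.uIcc a b) := by
    intro x hx
    rw [Set.uIcc_of_le hab.le] at hx
    exact partial_fraction a b z ha hz hx
  rw [intervalIntegral.integral_congr hcongr]
  rw [intervalIntegral.integral_const_mul]
  rw [intervalIntegral.integral_sub hint1 hint2]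
  rw [key_integral a b z hab (by linarith), key_integral a b 0 hab ha]

end MPAux

open scoped ENNReal NNReal in
set_option maxHeartbeats 2000000 in
/-- Stieltjes transform of the Marchenko–Pastur law: for `z < 0`,
`∫ 1/(x − z) dμ_MP(x) = (δ(1 − z) − 1 − √((δ(1 − z) − 1)² − 4δz)) / (2z)`. -/
theorem mp_stieltjes_transform (δ : ℝ) (hδ : 0 < δ) (z : ℝ) (hz : z < 0) :
    ∫ x, 1 / (x - z) ∂(mpMeasure δ)
      = (δ * (1 - z) - 1 - Real.sqrt ((δ * (1 - z) - 1) ^ 2 - 4 * δ * z)) / (2 * z) := by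
  have hπ := Real.pi_pos
  have hz0 : z ≠ 0 := ne_of_lt hz
  have hδ0 : δ ≠ 0 := ne_of_gt hδ
  set a := lamMinus δ with hadef
  set b := lamPlus δ with hbdef
  have hsd : 0 < Real.sqrt δ := Real.sqrt_pos.mpr hδ
  set t := 1 / Real.sqrt δ with htdef
  have ht : 0 < t := by positivity
  have ht2 : t^2 = 1/δ := by rw [htdef, div_pow, one_pow, Real.sq_sqrt hδ.le]
  have haeq : a = (1 - t)^2 := by rw [hadef]; rfl
  have hbeq : b = (1 + t)^2 := by rw [hbdef]; rfl
  have ha0 : 0 ≤ a := by rw [haeq]; positivity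
  have hab : a < b := by rw [haeq, hbeq]; nlinarith
  have hm : (a+b)/2 = 1 + 1/δ := by
    have h1 : (a+b)/2 = 1 + t^2 := by rw [haeq, hbeq]; ring
    rw [h1, ht2]
  have hr2 : ((b-a)/2)^2 = 4/δ := by
    have h1 : (b-a)/2 = 2*t := by rw [haeq, hbeq]; ring
    rw [h1, show (2*t)^2 = 4*t^2 by ring, ht2]; ring
  set g : ℝ → ℝ := fun x => 1/(x - z) with hg
  have hg_meas : Measurable g := by
    apply Measurable.div measurable_const
    exact measurable_id.sub measurable_const
  -- atom integrability
  have hκ : Integrable g (ENNReal.ofReal (1 - δ) • Measure.dirac 0) := by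
    apply Integrable.smul_measure _ ENNReal.ofReal_ne_top
    refine ⟨hg_meas.aestronglyMeasurable, ?_⟩
    simp [HasFiniteIntegral, lintegral_dirac]
  -- density measurability
  have hmpd : Measurable (mpDensity δ) := by
    unfold mpDensity
    exact (measurable_const.mul (Real.continuous_sqrt.measurable.comp
      ((measurable_const.sub measurable_id).mul (measurable_id.sub measurable_const)))).div
      (measurable_const.mul measurable_id)
  set ind := (Set.Icc a b).indicator (mpDensity δ) with hind
  have hind_meas : Measurable ind := hmpd.indicator measurableSet_Icc
  have hD_meas : Measurable (fun x => Real.toNNReal (ind x)) := hind_meas.real_toNNReal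
  have hind_nonneg : ∀ x, 0 ≤ ind x := by
    intro x
    apply Set.indicator_nonneg
    intro y hy
    unfold mpDensity
    rw [← hadef, ← hbdef]
    have hy0 : 0 ≤ y := le_trans ha0 hy.1
    apply div_nonneg (mul_nonneg hδ.le (Real.sqrt_nonneg _)) (by positivity)
  have hprod : ∀ x, ind x * g x = (Set.Icc a b).indicator (fun x => mpDensity δ x * g x) x := by
    intro x
    by_cases hx : x ∈ Set.Icc a b
    · rw [hind, Set.indicator_of_mem hx, Set.indicator_of_mem hx]
    · rw [hind, Set.indicator_of_notMem hx, Set.indicator_of_notMem hx, zero_mul]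
  have hdg : ∀ x, mpDensity δ x * g x
      = (δ/(2*Real.pi)) * (Real.sqrt ((b - x) * (x - a)) / (x * (x - z))) := by
    intro x
    unfold mpDensity
    rw [← hadef, ← hbdef, hg]
    rw [div_mul_div_comm, mul_one, div_mul_div_comm]
    rw [show 2*Real.pi*x*(x - z) = 2*Real.pi*(x*(x - z)) by ring]
  -- integrability on Icc
  have hIntOn : IntegrableOn (fun x => mpDensity δ x * g x) (Set.Icc a b) volume := by
    have h1 : IntervalIntegrable (fun x => (1/z) * (Real.sqrt ((b - x) * (x - a)) / (x - z)
        - Real.sqrt ((b - x) * (x - a)) / (x - 0))) volume a b :=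
      ((key_integrable a b z hab (by linarith)).sub (key_integrable a b 0 hab ha0)).const_mul _
    rw [intervalIntegrable_iff_integrableOn_Icc_of_le hab.le] at h1
    have h2 : IntegrableOn (fun x => Real.sqrt ((b - x) * (x - a)) / (x * (x - z)))
        (Set.Icc a b) volume := by
      apply h1.congr_fun _ measurableSet_Icc
      intro x hx
      exact (partial_fraction a b z ha0 hz hx).symm
    have h3 : IntegrableOn (fun x => (δ/(2*Real.pi))
        * (Real.sqrt ((b - x) * (x - a)) / (x * (x - z)))) (Set.Icc a b) volume :=
      h2.const_mul (δ/(2*Real.pi))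
    apply h3.congr_fun _ measurableSet_Icc
    intro x _
    exact (hdg x).symm
  -- withDensity integrability
  have hν : Integrable g (volume.withDensity (fun x => ENNReal.ofReal (ind x))) := by
    rw [show (fun x => ENNReal.ofReal (ind x))
        = fun x => ((Real.toNNReal (ind x) : ℝ≥0) : ℝ≥0∞) from rfl]
    rw [integrable_withDensity_iff_integrable_smul hD_meas]
    have he : (fun x => Real.toNNReal (ind x) • g x)
        = (Set.Icc a b).indicator (fun x => mpDensity δ x * g x) := by
      funext x
      rw [NNReal.smul_def, Real.coe_toNNReal _ (hind_nonneg x), ← hprod x]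
      rfl
    rw [he, integrable_indicator_iff measurableSet_Icc]
    exact hIntOn
  -- split the integral
  have hsplit : ∫ x, g x ∂(mpMeasure δ)
      = (∫ x, g x ∂(volume.withDensity (fun x => ENNReal.ofReal (ind x))))
        + ∫ x, g x ∂(ENNReal.ofReal (1 - δ) • Measure.dirac 0) := by
    rw [hadef, hbdef] at hind
    rw [show mpMeasure δ = volume.withDensity (fun x => ENNReal.ofReal (ind x))
        + ENNReal.ofReal (1 - δ) • Measure.dirac 0 by rw [hind]; rfl]
    exact integral_add_measure hν hκ
  -- atom integral
  have hatom : ∫ x, g x ∂(ENNReal.ofReal (1 - δ) • Measure.dirac 0)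
      = max (1 - δ) 0 * (1/(0 - z)) := by
    rw [MeasureTheory.integral_smul_measure, integral_dirac, ENNReal.toReal_ofReal', smul_eq_mul]
  -- bulk integral
  have hbulk : ∫ x, g x ∂(volume.withDensity (fun x => ENNReal.ofReal (ind x)))
      = (δ/(2*Real.pi)) * ((1/z) * ((Real.pi * ((a+b)/2 - z
          - Real.sqrt (((a+b)/2 - z)^2 - ((b-a)/2)^2)))
          - (Real.pi * ((a+b)/2 - 0 - Real.sqrt (((a+b)/2 - 0)^2 - ((b-a)/2)^2))))) := by
    rw [show (fun x => ENNReal.ofReal (ind x))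
        = fun x => ((Real.toNNReal (ind x) : ℝ≥0) : ℝ≥0∞) from rfl]
    rw [integral_withDensity_eq_integral_smul hD_meas]
    have he : (fun x => Real.toNNReal (ind x) • g x)
        = (Set.Icc a b).indicator (fun x => mpDensity δ x * g x) := by
      funext x
      rw [NNReal.smul_def, Real.coe_toNNReal _ (hind_nonneg x), ← hprod x]
      rfl
    rw [he, MeasureTheory.integral_indicator measurableSet_Icc]
    rw [integral_Icc_eq_integral_Ioc, ← intervalIntegral.integral_of_le hab.le]
    rw [show (fun x => mpDensity δ x * g x) = fun x => (δ/(2*Real.pi))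
        * (Real.sqrt ((b - x) * (x - a)) / (x * (x - z))) from funext hdg]
    rw [intervalIntegral.integral_const_mul]
    rw [bulk_integral a b z ha0 hab hz]
  rw [hsplit, hatom, hbulk]
  -- final algebra
  have hD0 : 0 ≤ (δ*(1 - z) - 1)^2 - 4*δ*z := by nlinarith [sq_nonneg (δ*(1-z) - 1)]
  have hMz : ((a+b)/2 - z)^2 - ((b-a)/2)^2 = ((δ*(1 - z) - 1)^2 - 4*δ*z)/δ^2 := by
    rw [hm, hr2]; field_simp; ring
  have hM0 : ((a+b)/2 - 0)^2 - ((b-a)/2)^2 = (1 - 1/δ)^2 := by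
    rw [hm, hr2]; field_simp; ring
  have hsqz : Real.sqrt (((a+b)/2 - z)^2 - ((b-a)/2)^2)
      = Real.sqrt ((δ*(1 - z) - 1)^2 - 4*δ*z) / δ := by
    rw [hMz, Real.sqrt_div hD0, Real.sqrt_sq hδ.le]
  have hsq0 : Real.sqrt (((a+b)/2 - 0)^2 - ((b-a)/2)^2) = |1 - 1/δ| := by
    rw [hM0, Real.sqrt_sq_eq_abs]
  rw [hsqz, hsq0, hm]
  set S := Real.sqrt ((δ*(1 - z) - 1)^2 - 4*δ*z) with hS
  rcases le_or_gt 1 δ with hδ1 | hδ1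
  · rw [max_eq_right (by linarith), abs_of_nonneg (by rw [sub_nonneg, div_le_one hδ]; linarith)]
    field_simp
    ring
  · have hd1 : (1:ℝ) - 1/δ ≤ 0 := by
      have h1 : (1:ℝ) ≤ 1/δ := by rw [le_div_iff₀ hδ]; nlinarith
      linarith
    rw [max_eq_left (by linarith), abs_of_nonpos hd1,
      show (1:ℝ)/(0 - z) = -(1/z) by rw [zero_sub, div_neg]]
    field_simp
    ring
end

section
/- Let δ ≠ 0 and λ be real numbers, and let p ≠ q be real numbers. Suppose the real numbers f_p, g_p, f_q, g_q satisfy the self-consistency equations p f_p = 1 − (1 + λ) f_p − f_p g_p, δ g_p = − f_p (1 + g_p), and the same two equations with p replaced by q (and f_p, g_p replaced by f_q, g_q). Then (f_p − f_q)(1 − δ g_p g_q) = (q − p) f_p f_q. -/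
theorem dmft_ridge_response_identity_general (δ lam p q fp gp fq gq : ℝ)
    (h1p : p * fp = 1 - (1 + lam) * fp - fp * gp)
    (h2p : δ * gp = -fp * (1 + gp))
    (h1q : q * fq = 1 - (1 + lam) * fq - fq * gq)
    (h2q : δ * gq = -fq * (1 + gq)) :
    (fp - fq) * (1 - δ * gp * gq) = (q - p) * fp * fq := by
  -- Cross-multiplying the first equations eliminates `lam`, leaving `fp * fq * (gp - gq)`;
  -- cross-multiplying the second ones rewrites that as `δ * gp * gq * (fq - fp)`.
  linear_combination fq * h1p - fp * h1q + fq * gq * h2p - fp * gp * h2q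

/-- The algebraic identity underlying the frequency-domain relation
`1 − δ R̄_ℓ(p) R̄_ℓ(q) = (q − p) R̄_θ(p) R̄_θ(q) / (R̄_θ(p) − R̄_θ(q))`
for the Laplace transforms `f_p = R̄_θ(p)`, `g_p = R̄_ℓ(p)` of the DMFT response
functions of high-dimensional ridge regression. -/
theorem dmft_ridge_response_identity (δ lam p q fp gp fq gq : ℝ)
    (hδ : δ ≠ 0) (hpq : p ≠ q)
    (h1p : p * fp = 1 - (1 + lam) * fp - fp * gp)
    (h2p : δ * gp = -fp * (1 + gp))
    (h1q : q * fq = 1 - (1 + lam) * fq - fq * gq)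
    (h2q : δ * gq = -fq * (1 + gq)) :
    (fp - fq) * (1 - δ * gp * gq) = (q - p) * fp * fq :=
  dmft_ridge_response_identity_general δ lam p q fp gp fq gq h1p h2p h1q h2q
end
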